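/- Let n ≥ 1, let f : ℤⁿ → ℤ be an affine function, let s ∈ {1,…,n}, and let L ⊆ {1,…,n} × {1,…,n} be a set of ordered pairs. Let S be the set of (a₁,…,aₙ) ∈ ℤⁿ such that a₁,…,a_s ≥ 0, a_{s+1},…,aₙ ≤ 0, and a_j − a_k ≥ 0 for every (j,k) ∈ L. Assume f(a) ≥ 0 for every a ∈ S. Then there exist nonnegative real numbers α₁,…,αₙ, nonnegative real numbers γ_{j,k} for (j,k) ∈ L, and a nonnegative integer β such that f(a₁,…,aₙ) = Σ_{i=1}^{n} αᵢ·|aᵢ| + Σ_{(j,k)∈L} γ_{j,k}·(a_j − a_k) + β for every (a₁,…,aₙ) ∈ S. -/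

import Mathlib

/-!
Over `ℚ`, Farkas' lemma says that either the linear part `ℓ` of `f` is a nonnegative combination
of the functionals `±aᵢ` and `a_j - a_k` cutting out the cone `S`, or some rational point `w` of
the cone has `ℓ w < 0`. In the first case the coefficients are the `αᵢ` and `γ_{j,k}`, and
`β = f 0 ≥ 0`. In the second case clearing denominators gives an integer point `z` of the cone,
and `f (k • z) = c₀ + k * ℓ z` is negative for large `k`, a contradiction.

Farkas' lemma itself is proved by induction on the number of generators: if the functional `φ`
separating `x` from the smaller cone is negative on the new generator `v`, project along `v` onto
`ker φ` and apply the induction hypothesis to the projected cone and point.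
-/

open Set

namespace PointedCone

variable {K V : Type*} [Field K] [LinearOrder K] [IsStrictOrderedRing K]
  [AddCommGroup V] [Module K V]

lemma apply_nonneg_of_mem_hull {φ : Module.Dual K V} {s : Set V} (hs : ∀ v ∈ s, 0 ≤ φ v)
    {x : V} (hx : x ∈ hull K s) : 0 ≤ φ x :=
  (Submodule.span_le (p := (positive K K).comap φ)).2 hs hx

theorem mem_hull_range_fin_or_exists_dual_neg {m : ℕ} (g : Fin m → V) (x : V) :
    x ∈ hull K (range g) ∨ ∃ φ : Module.Dual K V, (∀ i, 0 ≤ φ (g i)) ∧ φ x < 0 := by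
  induction m generalizing x with
  | zero =>
    by_cases hx : x = 0
    · exact .inl (hx ▸ zero_mem _)
    · obtain ⟨φ, hφx⟩ := Module.Projective.exists_dual_eq_one K hx
      exact .inr ⟨-φ, finZeroElim, by simp [hφx]⟩
  | succ m ih =>
    rw [Fin.range_fin_succ]
    rcases ih (Fin.tail g) x with hx | ⟨φ, hφ, hφx⟩
    · exact .inl (Submodule.span_mono (subset_insert _ _) hx)
    by_cases hφ₀ : 0 ≤ φ (g 0)
    · exact .inr ⟨φ, Fin.forall_fin_succ.2 ⟨hφ₀, hφ⟩, hφx⟩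
    push Not at hφ₀
    -- `P` projects along `g 0` onto the kernel of `φ`.
    set P : V →ₗ[K] V := LinearMap.id - (φ (g 0))⁻¹ • φ.smulRight (g 0) with hP
    have hP_apply (v : V) : P v = v - ((φ (g 0))⁻¹ * φ v) • g 0 := by
      simp [hP, mul_smul]
    rcases ih (P ∘ Fin.tail g) (P x) with hPx | ⟨ψ, hψ, hψx⟩
    · left
      rw [range_comp, ← LinearMap.coe_restrictScalars {c : K // 0 ≤ c} P, hull,
        ← Submodule.map_span] at hPx
      obtain ⟨z, hz, hPz⟩ := hPx
      have hφz : 0 ≤ φ z := apply_nonneg_of_mem_hull (forall_mem_range.2 hφ) hz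
      have hx : x = z + ((φ (g 0))⁻¹ * (φ x - φ z)) • g 0 := by
        simp only [LinearMap.coe_restrictScalars, hP_apply] at hPz
        linear_combination (norm := module) -hPz
      rw [hx]
      refine add_mem (Submodule.span_mono (subset_insert _ _) hz)
        (smul_mem _ ?_ (subset_hull (mem_insert _ _)))
      exact mul_nonneg_of_nonpos_of_nonpos (inv_nonpos.2 hφ₀.le) (by linarith)
    · refine .inr ⟨ψ ∘ₗ P, Fin.forall_fin_succ.2 ⟨?_, hψ⟩, hψx⟩
      simp [hP_apply, hφ₀.ne]

theorem mem_hull_range_or_exists_dual_neg {ι : Type*} [Finite ι] (g : ι → V) (x : V) :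
    x ∈ hull K (range g) ∨ ∃ φ : Module.Dual K V, (∀ i, 0 ≤ φ (g i)) ∧ φ x < 0 := by
  obtain ⟨m, ⟨e⟩⟩ := Finite.exists_equiv_fin ι
  rw [← e.symm.surjective.range_comp g]
  refine (mem_hull_range_fin_or_exists_dual_neg (g ∘ e.symm) x).imp_right ?_
  rintro ⟨φ, hφ, hφx⟩
  exact ⟨φ, fun i ↦ by simpa using hφ (e i), hφx⟩

end PointedCone

theorem Module.Dual.exists_nonneg_sum_eq_or_exists_neg {K W ι : Type*} [Field K] [LinearOrder K]
    [IsStrictOrderedRing K] [AddCommGroup W] [Module K W] [Module.IsReflexive K W] [Fintype ι]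
    (g : ι → Module.Dual K W) (ℓ : Module.Dual K W) :
    (∃ μ : ι → K, (∀ i, 0 ≤ μ i) ∧ ∑ i, μ i • g i = ℓ) ∨
      ∃ w : W, (∀ i, 0 ≤ g i w) ∧ ℓ w < 0 := by
  rcases PointedCone.mem_hull_range_or_exists_dual_neg (K := K) g ℓ with hℓ | ⟨Φ, hΦ, hΦℓ⟩
  · obtain ⟨μ, hμ⟩ := (Submodule.mem_span_range_iff_exists_fun _).1 hℓ
    exact .inl ⟨fun i ↦ μ i, fun i ↦ (μ i).2, hμ⟩
  · exact .inr ⟨(Module.evalEquiv K W).symm Φ, by simpa using hΦ, by simpa using hΦℓ⟩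

theorem nonneg_of_forall_add_nsmul_nonneg {α : Type*} [AddCommGroup α] [LinearOrder α]
    [IsOrderedAddMonoid α] [Archimedean α] {c d : α} (h : ∀ k : ℕ, 0 ≤ c + k • d) : 0 ≤ d := by
  by_contra! hd
  obtain ⟨k, hk⟩ := exists_lt_nsmul (neg_pos.2 hd) c
  rw [smul_neg, lt_neg_iff_add_neg] at hk
  exact (h k).not_gt hk

theorem Rat.exists_pos_nat_mul_eq_intCast {σ : Type*} [Fintype σ] (w : σ → ℚ) :
    ∃ N : ℕ, 0 < N ∧ ∃ z : σ → ℤ, ∀ i, (z i : ℚ) = N * w i := by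
  refine ⟨∏ i, (w i).den, Finset.prod_pos fun i _ ↦ (w i).pos, ?_⟩
  choose k hk using fun i ↦ Finset.dvd_prod_of_mem (fun j ↦ (w j).den) (Finset.mem_univ i)
  refine ⟨fun i ↦ (w i).num * k i, fun i ↦ ?_⟩
  simp [hk i, ← Rat.mul_den_eq_num]
  ring

theorem Module.Dual.nonneg_of_forall_intCast_add_nonneg {ι σ : Type*} [Fintype σ]
    (g : ι → Module.Dual ℚ (σ → ℚ)) (ℓ : Module.Dual ℚ (σ → ℚ)) (c₀ : ℚ)
    (h : ∀ a : σ → ℤ, (∀ i, 0 ≤ g i (Int.cast ∘ a)) → 0 ≤ c₀ + ℓ (Int.cast ∘ a))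
    {w : σ → ℚ} (hw : ∀ i, 0 ≤ g i w) : 0 ≤ ℓ w := by
  obtain ⟨N, hN, z, hz⟩ := Rat.exists_pos_nat_mul_eq_intCast w
  have hcast (k : ℕ) : (Int.cast ∘ (k • z) : σ → ℚ) = k • N • w := by
    ext i; simp [hz, mul_left_comm]
  refine (nsmul_nonneg_iff hN.ne').1 (nonneg_of_forall_add_nsmul_nonneg (c := c₀) fun k ↦ ?_)
  have := h (k • z) fun i ↦ by
    rw [hcast, map_nsmul, map_nsmul]; exact nsmul_nonneg (nsmul_nonneg (hw i) _) _
  rwa [hcast, map_nsmul, map_nsmul] at this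

section SignedOrderCone

variable {n : ℕ} (s : ℕ) (L : Finset (Fin n × Fin n))

def signedOrderCone : Set (Fin n → ℤ) :=
  {a | (∀ i : Fin n, i.val < s → 0 ≤ a i) ∧ (∀ i : Fin n, s ≤ i.val → a i ≤ 0) ∧
    ∀ pr ∈ L, 0 ≤ a pr.1 - a pr.2}

def signedCoord (i : Fin n) : Module.Dual ℚ (Fin n → ℚ) :=
  (if (i : ℕ) < s then 1 else -1 : ℚ) • LinearMap.proj i

def signedOrderConstraint : Fin n ⊕ L → Module.Dual ℚ (Fin n → ℚ) :=
  Sum.elim (signedCoord s) fun p ↦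
    LinearMap.proj (R := ℚ) (φ := fun _ ↦ ℚ) p.1.1 - LinearMap.proj p.1.2

variable {s L}

lemma signedCoord_intCast_nonneg_iff (a : Fin n → ℤ) (i : Fin n) :
    0 ≤ signedCoord s i (Int.cast ∘ a) ↔ ((i : ℕ) < s → 0 ≤ a i) ∧ (s ≤ i → a i ≤ 0) := by
  by_cases hi : (i : ℕ) < s
  · simp [signedCoord, hi]
  · simp [signedCoord, hi, not_lt.1 hi]

lemma mem_signedOrderCone_iff {a : Fin n → ℤ} :
    a ∈ signedOrderCone s L ↔ ∀ k, 0 ≤ signedOrderConstraint s L k (Int.cast ∘ a) := by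
  simp [signedOrderCone, signedOrderConstraint, Sum.forall, signedCoord_intCast_nonneg_iff,
    forall_and, and_assoc]

lemma signedCoord_apply_of_mem {a : Fin n → ℤ} (ha : a ∈ signedOrderCone s L) (i : Fin n) :
    signedCoord s i (Int.cast ∘ a) = |(a i : ℚ)| := by
  by_cases hi : (i : ℕ) < s
  · simp [signedCoord, hi, abs_of_nonneg (Int.cast_nonneg_iff.2 (ha.1 i hi))]
  · simp [signedCoord, hi, abs_of_nonpos (Int.cast_nonpos.2 (ha.2.1 i (not_lt.1 hi)))]

lemma sum_smul_signedOrderConstraint_apply {μ : Fin n ⊕ L → ℚ} {γ : Fin n × Fin n → ℚ}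
    (hγ : ∀ p : L, μ (.inr p) = γ p) {a : Fin n → ℤ} (ha : a ∈ signedOrderCone s L) :
    (∑ k, μ k • signedOrderConstraint s L k) (Int.cast ∘ a) =
      ∑ i, μ (.inl i) * |(a i : ℚ)| + ∑ p ∈ L, γ p * ((a p.1 : ℚ) - a p.2) := by
  rw [Fintype.sum_sum_type, LinearMap.add_apply, LinearMap.sum_apply, LinearMap.sum_apply,
    ← Finset.sum_coe_sort L]
  simp [signedOrderConstraint, signedCoord_apply_of_mem ha, hγ]

end SignedOrderCone

theorem farkas_affine_nonneg (n : ℕ) (c₀ : ℤ) (c : Fin n → ℤ)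
    (f : (Fin n → ℤ) → ℤ) (hf : ∀ a : Fin n → ℤ, f a = c₀ + ∑ i, c i * a i)
    (s : ℕ)
    (L : Finset (Fin n × Fin n))
    (S : Set (Fin n → ℤ))
    (hS : S = {a : Fin n → ℤ |
      (∀ i : Fin n, i.val < s → 0 ≤ a i) ∧
      (∀ i : Fin n, s ≤ i.val → a i ≤ 0) ∧
      ∀ pr ∈ L, 0 ≤ a pr.1 - a pr.2})
    (hpos : ∀ a ∈ S, 0 ≤ f a) :
    ∃ (α : Fin n → ℝ) (γ : Fin n × Fin n → ℝ) (b : ℕ),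
      (∀ i, 0 ≤ α i) ∧ (∀ pr, 0 ≤ γ pr) ∧
      ∀ a ∈ S, (f a : ℝ) =
        (∑ i, α i * |(a i : ℝ)|) + (∑ pr ∈ L, γ pr * ((a pr.1 : ℝ) - (a pr.2 : ℝ))) + b := by
  change S = signedOrderCone s L at hS
  subst hS
  set ℓ : Module.Dual ℚ (Fin n → ℚ) := ∑ i, (c i : ℚ) • LinearMap.proj i
  have hfℓ (a : Fin n → ℤ) : (f a : ℚ) = c₀ + ℓ (Int.cast ∘ a) := by simp [hf, ℓ]
  have hc₀ : 0 ≤ c₀ := by simpa [hf] using hpos 0 (by simp [signedOrderCone])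
  rcases Module.Dual.exists_nonneg_sum_eq_or_exists_neg (signedOrderConstraint s L) ℓ with
    ⟨μ, hμ, hμℓ⟩ | ⟨w, hw, hℓw⟩
  · set γ : Fin n × Fin n → ℚ := fun p ↦ if h : p ∈ L then μ (.inr ⟨p, h⟩) else 0
    refine ⟨fun i ↦ μ (.inl i), fun p ↦ γ p, c₀.toNat, fun i ↦ Rat.cast_nonneg.2 (hμ (.inl i)),
      fun p ↦ ?_, fun a ha ↦ ?_⟩
    · by_cases hp : p ∈ L <;> simp [γ, hp, hμ]
    · have := hfℓ a
      rw [← hμℓ, sum_smul_signedOrderConstraint_apply (γ := γ) (fun p ↦ by simp [γ]) ha,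
        ← Int.toNat_of_nonneg hc₀, add_comm] at this
      beta_reduce
      exact_mod_cast this
  · refine absurd (ℓ.nonneg_of_forall_intCast_add_nonneg _ c₀ (fun a ha ↦ ?_) hw) hℓw.not_ge
    rw [← hfℓ]
    exact_mod_cast hpos a (mem_signedOrderCone_iff.2 ha)
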